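/- For A-bounded operators T, S and q ∈ ℂ with 0 < |q| ≤ 1, one has |c_{A,q}(T) − c_{A,q}(S)| ≤ ω_{A,q}(T − S); consequently, if ‖Tₙ − T‖_A → 0 then c_{A,q}(Tₙ) → c_{A,q}(T). -/

import Mathlib

noncomputable def innA {H : Type*} [NormedAddCommGroup H] [InnerProductSpace ℂ H]
    (A : H →L[ℂ] H) (x y : H) : ℂ := inner ℂ (A x) y

noncomputable def snA {H : Type*} [NormedAddCommGroup H] [InnerProductSpace ℂ H]
    (A : H →L[ℂ] H) (x : H) : ℝ := Real.sqrt (innA A x x).re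

noncomputable def opNormA {H : Type*} [NormedAddCommGroup H] [InnerProductSpace ℂ H]
    (A T : H →L[ℂ] H) : ℝ := sSup {r : ℝ | ∃ x : H, snA A x = 1 ∧ r = snA A (T x)}

def ABounded {H : Type*} [NormedAddCommGroup H] [InnerProductSpace ℂ H]
    (A T : H →L[ℂ] H) : Prop := ∃ c > 0, ∀ x : H, snA A (T x) ≤ c * snA A x

noncomputable def wAq {H : Type*} [NormedAddCommGroup H] [InnerProductSpace ℂ H]
    (A T : H →L[ℂ] H) (q : ℂ) : ℝ :=
  sSup {r : ℝ | ∃ x y : H, snA A x = 1 ∧ snA A y = 1 ∧ innA A x y = q ∧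
    r = ‖innA A (T x) y‖}

noncomputable def cAq {H : Type*} [NormedAddCommGroup H] [InnerProductSpace ℂ H]
    (A T : H →L[ℂ] H) (q : ℂ) : ℝ :=
  sInf {r : ℝ | ∃ x y : H, snA A x = 1 ∧ snA A y = 1 ∧ innA A x y = q ∧
    r = ‖innA A (T x) y‖}

noncomputable def wA {H : Type*} [NormedAddCommGroup H] [InnerProductSpace ℂ H]
    (A T : H →L[ℂ] H) : ℝ :=
  sSup {r : ℝ | ∃ x : H, snA A x = 1 ∧ r = ‖innA A (T x) x‖}

noncomputable def cA {H : Type*} [NormedAddCommGroup H] [InnerProductSpace ℂ H]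
    (A T : H →L[ℂ] H) : ℝ :=
  sInf {r : ℝ | ∃ x : H, snA A x = 1 ∧ r = ‖innA A (T x) x‖}

def WAq {H : Type*} [NormedAddCommGroup H] [InnerProductSpace ℂ H]
    (A T : H →L[ℂ] H) (q : ℂ) : Set ℂ :=
  {r : ℂ | ∃ x y : H, snA A x = 1 ∧ snA A y = 1 ∧ innA A x y = q ∧ r = innA A (T x) y}

/-!
Since `⟪x, y⟫_A = ⟪A^{1/2} x, A^{1/2} y⟫`, the `A`-seminorm is `x ↦ ‖A^{1/2} x‖` and inherits
Cauchy–Schwarz and the triangle inequality. For every admissible pair `(x, y)`,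
`|⟪T x, y⟫_A| ≤ |⟪S x, y⟫_A| + |⟪(T - S) x, y⟫_A|`, and taking the infimum gives
`c_{A,q}(T) ≤ c_{A,q}(S) + ω_{A,q}(T - S)`; swapping `T` and `S` gives the absolute value.
Continuity follows from `ω_{A,q}(R) ≤ ‖R‖_A`. If no admissible pair exists, all these
quantities are `sInf ∅ = sSup ∅ = 0`.
-/

section

variable {H : Type*} [NormedAddCommGroup H] [InnerProductSpace ℂ H]

lemma wAq_neg (A R : H →L[ℂ] H) (q : ℂ) : wAq A (-R) q = wAq A R q := by
  simp only [wAq, innA, neg_apply, map_neg, inner_neg_left, norm_neg]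

lemma wAq_sub_comm (A T S : H →L[ℂ] H) (q : ℂ) : wAq A (S - T) q = wAq A (T - S) q := by
  rw [← neg_sub, wAq_neg]

lemma cAq_le_norm_innA {A T : H →L[ℂ] H} {q : ℂ} {x y : H} (hx : snA A x = 1)
    (hy : snA A y = 1) (hxy : innA A x y = q) : cAq A T q ≤ ‖innA A (T x) y‖ :=
  csInf_le ⟨0, by rintro r ⟨x, y, -, -, -, rfl⟩; exact norm_nonneg _⟩ ⟨x, y, hx, hy, hxy, rfl⟩

lemma opNormA_nonneg (A R : H →L[ℂ] H) : 0 ≤ opNormA A R :=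
  Real.sSup_nonneg (by rintro r ⟨x, -, rfl⟩; exact Real.sqrt_nonneg _)

lemma snA_le_opNormA {A R : H →L[ℂ] H} (hR : ABounded A R) {x : H} (hx : snA A x = 1) :
    snA A (R x) ≤ opNormA A R := by
  obtain ⟨c, -, hc⟩ := hR
  refine le_csSup ⟨c, ?_⟩ ⟨x, hx, rfl⟩
  rintro r ⟨x, hx, rfl⟩
  simpa [hx] using hc x

variable [CompleteSpace H] {A : H →L[ℂ] H}

lemma innA_eq_inner_sqrt (hA : A.IsPositive) (x y : H) :
    innA A x y = inner ℂ (CFC.sqrt A x) (CFC.sqrt A y) := by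
  have hsa : IsSelfAdjoint (CFC.sqrt A) := (CFC.sqrt_nonneg A).isSelfAdjoint
  rw [innA]
  conv_lhs => rw [← CFC.sqrt_mul_sqrt_self A ((A.nonneg_iff_isPositive).mpr hA)]
  rw [mul_apply_eq_comp, ← ContinuousLinearMap.adjoint_inner_right, hsa.adjoint_eq]

lemma snA_eq_norm_sqrt (hA : A.IsPositive) (x : H) : snA A x = ‖CFC.sqrt A x‖ := by
  rw [snA, innA_eq_inner_sqrt hA, inner_self_eq_norm_sq_to_K]
  norm_cast
  exact Real.sqrt_sq (norm_nonneg _)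

lemma norm_innA_le (hA : A.IsPositive) (x y : H) : ‖innA A x y‖ ≤ snA A x * snA A y := by
  rw [innA_eq_inner_sqrt hA, snA_eq_norm_sqrt hA, snA_eq_norm_sqrt hA]
  exact norm_inner_le_norm _ _

lemma snA_sub_le (hA : A.IsPositive) (x y : H) : snA A (x - y) ≤ snA A x + snA A y := by
  simp only [snA_eq_norm_sqrt hA, map_sub]
  exact norm_sub_le _ _

lemma ABounded.sub (hA : A.IsPositive) {T S : H →L[ℂ] H} (hT : ABounded A T)
    (hS : ABounded A S) : ABounded A (T - S) := by
  obtain ⟨c, hc, hTc⟩ := hT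
  obtain ⟨d, hd, hSd⟩ := hS
  refine ⟨c + d, add_pos hc hd, fun x => ?_⟩
  calc snA A ((T - S) x) ≤ snA A (T x) + snA A (S x) := snA_sub_le hA _ _
    _ ≤ c * snA A x + d * snA A x := add_le_add (hTc x) (hSd x)
    _ = (c + d) * snA A x := by ring

lemma norm_innA_le_wAq (hA : A.IsPositive) {R : H →L[ℂ] H} (hR : ABounded A R) {q : ℂ}
    {x y : H} (hx : snA A x = 1) (hy : snA A y = 1) (hxy : innA A x y = q) :
    ‖innA A (R x) y‖ ≤ wAq A R q := by
  obtain ⟨c, -, hc⟩ := hR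
  refine le_csSup ⟨c, ?_⟩ ⟨x, y, hx, hy, hxy, rfl⟩
  rintro r ⟨x, y, hx, hy, -, rfl⟩
  calc ‖innA A (R x) y‖ ≤ snA A (R x) * snA A y := norm_innA_le hA _ _
    _ ≤ c := by simpa [hx, hy] using hc x

lemma cAq_le_cAq_add_wAq (hA : A.IsPositive) {T S : H →L[ℂ] H} (hT : ABounded A T)
    (hS : ABounded A S) (q : ℂ) : cAq A T q ≤ cAq A S q + wAq A (T - S) q := by
  by_cases hne : ∃ x y : H, snA A x = 1 ∧ snA A y = 1 ∧ innA A x y = q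
  · obtain ⟨x₀, y₀, hx₀, hy₀, hxy₀⟩ := hne
    rw [← sub_le_iff_le_add]
    refine le_csInf ⟨_, x₀, y₀, hx₀, hy₀, hxy₀, rfl⟩ ?_
    rintro r ⟨x, y, hx, hy, hxy, rfl⟩
    have hsplit : innA A (T x) y = innA A (S x) y + innA A ((T - S) x) y := by
      simp [innA]
    calc cAq A T q - wAq A (T - S) q ≤ ‖innA A (T x) y‖ - ‖innA A ((T - S) x) y‖ :=
          sub_le_sub (cAq_le_norm_innA hx hy hxy) (norm_innA_le_wAq hA (hT.sub hA hS) hx hy hxy)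
      _ ≤ ‖innA A (S x) y‖ := by
          rw [hsplit]
          linarith [norm_add_le (innA A (S x) y) (innA A ((T - S) x) y)]
  · have hempty : ∀ R : H →L[ℂ] H, {r : ℝ | ∃ x y : H, snA A x = 1 ∧ snA A y = 1 ∧
        innA A x y = q ∧ r = ‖innA A (R x) y‖} = ∅ := fun R =>
      Set.eq_empty_of_forall_notMem fun _ ⟨x, y, hx, hy, hxy, _⟩ => hne ⟨x, y, hx, hy, hxy⟩
    simp only [cAq, wAq, hempty, Real.sInf_empty, Real.sSup_empty, add_zero, le_refl]

lemma abs_cAq_sub_cAq_le (hA : A.IsPositive) {T S : H →L[ℂ] H} (hT : ABounded A T)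
    (hS : ABounded A S) (q : ℂ) : |cAq A T q - cAq A S q| ≤ wAq A (T - S) q :=
  abs_sub_le_iff.2
    ⟨by linarith [cAq_le_cAq_add_wAq hA hT hS q],
     by linarith [cAq_le_cAq_add_wAq hA hS hT q, wAq_sub_comm A T S q]⟩

lemma wAq_le_opNormA (hA : A.IsPositive) {R : H →L[ℂ] H} (hR : ABounded A R) (q : ℂ) :
    wAq A R q ≤ opNormA A R := by
  refine Real.sSup_le ?_ (opNormA_nonneg A R)
  rintro r ⟨x, y, hx, hy, -, rfl⟩
  calc ‖innA A (R x) y‖ ≤ snA A (R x) * snA A y := norm_innA_le hA _ _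
    _ ≤ opNormA A R := by simpa [hy] using snA_le_opNormA hR hx

end

theorem stmt17_general {H : Type*} [NormedAddCommGroup H] [InnerProductSpace ℂ H] [CompleteSpace H]
    (A : H →L[ℂ] H) (hA : A.IsPositive)
    (q : ℂ) :
    (∀ T S : H →L[ℂ] H, ABounded A T → ABounded A S →
      |cAq A T q - cAq A S q| ≤ wAq A (T - S) q) ∧
    (∀ (Tn : ℕ → H →L[ℂ] H) (T : H →L[ℂ] H), (∀ n, ABounded A (Tn n)) → ABounded A T →
      Filter.Tendsto (fun n => opNormA A (Tn n - T)) Filter.atTop (nhds 0) →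
      Filter.Tendsto (fun n => cAq A (Tn n) q) Filter.atTop (nhds (cAq A T q))) := by
  refine ⟨fun T S hT hS => abs_cAq_sub_cAq_le hA hT hS q, fun Tn T hTn hT hlim => ?_⟩
  have hdist : ∀ n, dist (cAq A (Tn n) q) (cAq A T q) ≤ opNormA A (Tn n - T) := fun n =>
    (abs_cAq_sub_cAq_le hA (hTn n) hT q).trans (wAq_le_opNormA hA ((hTn n).sub hA hT) q)
  exact tendsto_iff_dist_tendsto_zero.2 (squeeze_zero (fun _ => dist_nonneg) hdist hlim)

theorem stmt17 {H : Type*} [NormedAddCommGroup H] [InnerProductSpace ℂ H] [CompleteSpace H]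
    (A : H →L[ℂ] H) (hA : A.IsPositive) (hA0 : A ≠ 0)
    (q : ℂ) (hq0 : 0 < ‖q‖) (hq1 : ‖q‖ ≤ 1) :
    (∀ T S : H →L[ℂ] H, ABounded A T → ABounded A S →
      |cAq A T q - cAq A S q| ≤ wAq A (T - S) q) ∧
    (∀ (Tn : ℕ → H →L[ℂ] H) (T : H →L[ℂ] H), (∀ n, ABounded A (Tn n)) → ABounded A T →
      Filter.Tendsto (fun n => opNormA A (Tn n - T)) Filter.atTop (nhds 0) →
      Filter.Tendsto (fun n => cAq A (Tn n) q) Filter.atTop (nhds (cAq A T q))) :=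
  stmt17_general A hA q
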